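/- arXiv:0811.3959 — 4 statements merged into one kernel-verified Lean document; each statement's English description precedes it below -/
import Mathlib

section
/- Let Q ≥ 2 and E ≥ 2 be natural numbers, set P = Q^E and T = 1 + Q^(E-1). If A is a natural number with A^(P-1) ≡ 1 (mod P), then (A·T)^(P-1) ≢ 1 (mod P); that is, multiplication by T maps each element passing the Fermat test modulo P to one failing it. -/
/-!
Reduce modulo `P = Q ^ E` and put `q = Q ^ (E - 1)`. Since `2 (E - 1) ≥ E`, `q² = 0` in `ZMod P`,
so the binomial expansion of `(1 + q) ^ (P - 1)` stops after the linear term and gives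
`1 + (P - 1) q = 1 - q`. Hence `(A T) ^ (P - 1) = A ^ (P - 1) (1 - q) = 1 - q`, which is not `1`
because `0 < Q ^ (E - 1) < P`.
-/

lemma one_add_pow_of_sq_eq_zero {R : Type*} [CommRing R] {q : R} (hq : q ^ 2 = 0) (n : ℕ) :
    (1 + q) ^ n = 1 + n * q := by
  induction n with
  | zero => simp
  | succ n ih =>
    rw [pow_succ, ih]
    push_cast
    linear_combination (n : R) * hq

namespace ZMod

lemma one_add_pow_pred_of_sq_eq_zero {n : ℕ} [NeZero n] {q : ZMod n} (hq : q ^ 2 = 0) :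
    (1 + q) ^ (n - 1) = 1 - q := by
  rw [one_add_pow_of_sq_eq_zero hq, Nat.cast_pred (Nat.pos_of_neZero n), natCast_self]
  ring

lemma mul_one_add_pow_pred_ne_one {n : ℕ} [NeZero n] {a q : ZMod n} (ha : a ^ (n - 1) = 1)
    (hq : q ^ 2 = 0) (hq0 : q ≠ 0) : (a * (1 + q)) ^ (n - 1) ≠ 1 := by
  rw [mul_pow, ha, one_mul, one_add_pow_pred_of_sq_eq_zero hq]
  intro h
  exact hq0 (by linear_combination -h)

end ZMod

/-- For `P = Q^E`, `T = 1 + Q^(E-1)` with `Q, E ≥ 2`: if `A^(P-1) ≡ 1 (mod P)`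
then `(A·T)^(P-1) ≢ 1 (mod P)`. -/
theorem stmt_5 (Q E : ℕ) (hQ : 2 ≤ Q) (hE : 2 ≤ E) (A : ℕ)
    (hA : A ^ (Q ^ E - 1) ≡ 1 [MOD Q ^ E]) :
    ¬ ((A * (1 + Q ^ (E - 1))) ^ (Q ^ E - 1) ≡ 1 [MOD Q ^ E]) := by
  have : NeZero (Q ^ E) := ⟨by positivity⟩
  have hq_sq : ((Q ^ (E - 1) : ℕ) : ZMod (Q ^ E)) ^ 2 = 0 := by
    rw [← Nat.cast_pow, ZMod.natCast_eq_zero_iff, ← pow_mul]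
    exact pow_dvd_pow Q (by omega)
  have hq_ne : ((Q ^ (E - 1) : ℕ) : ZMod (Q ^ E)) ≠ 0 := by
    rw [Ne, ZMod.natCast_eq_zero_iff]
    exact Nat.not_dvd_of_pos_of_lt (by positivity) (Nat.pow_lt_pow_right hQ (by omega))
  rw [← ZMod.natCast_eq_natCast_iff] at hA ⊢
  push_cast at hA hq_sq hq_ne ⊢
  exact ZMod.mul_one_add_pow_pred_ne_one hA hq_sq hq_ne
end

section
/- Let P be an odd number greater than 1 and write P - 1 = S·2^h with S odd. Suppose i < h is such that there exists Z with Z^(S·2^i) ≡ -1 (mod P) but no X satisfies X^(S·2^(i+1)) ≡ -1 (mod P). Then every Rabin–Miller non-witness A for P satisfies A^(S·2^(i+1)) ≡ 1 (mod P) and A^(S·2^i) ≡ ±1 (mod P); in particular every non-witness satisfies A^(P-1) ≡ 1 (mod P). -/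
/-!
Work in `ZMod P` with `g = A`. Squaring sends `-1` to `1` and keeps `1` fixed, so once some
`g^(S·2^j)` is `±1`, every later term of the sequence `g^(S·2^k)` is `1`. For a non-witness
such a `j` exists, and `j ≤ i`: otherwise `g^(2^(j-i-1))` would be an `S·2^(i+1)`-th root
of `-1`. Hence `g^(S·2^i) = ±1` and `g^(S·2^(i+1)) = 1`, which gives `g^(P-1) = 1` as
`P - 1 = S·2^h` with `i < h`.
-/

/-- `A` is a Rabin–Miller non-witness for an odd `P > 1` with `P - 1 = S·2^h` (`S` odd):
`A^S ≡ 1 (mod P)` or `A^(S·2^i) ≡ -1 (mod P)` for some `i < h`. -/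
def RMNonWitness (P S h A : ℕ) : Prop :=
  A ^ S ≡ 1 [MOD P] ∨ ∃ i < h, A ^ (S * 2 ^ i) ≡ P - 1 [MOD P]

section TwoPowerLadder

variable {M : Type*} [Monoid M] {g : M} {S j k : ℕ}

theorem pow_mul_two_pow_eq_pow_pow (hkj : k ≤ j) :
    g ^ (S * 2 ^ j) = (g ^ 2 ^ (j - k)) ^ (S * 2 ^ k) := by
  rw [← pow_mul, mul_left_comm, ← pow_add, Nat.sub_add_cancel hkj]

theorem pow_mul_two_pow_eq_one_of_le (h : g ^ (S * 2 ^ j) = 1) (hjk : j ≤ k) :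
    g ^ (S * 2 ^ k) = 1 := by
  rw [pow_mul_two_pow_eq_pow_pow (g := g) hjk, ← pow_mul, mul_comm, pow_mul, h, one_pow]

theorem pow_mul_two_pow_succ_eq_one [HasDistribNeg M] (h : g ^ (S * 2 ^ j) = -1) :
    g ^ (S * 2 ^ (j + 1)) = 1 := by
  rw [pow_succ, ← mul_assoc, pow_mul, h, neg_one_sq]

theorem pow_mul_two_pow_eq_one_and_eq_one_or_neg_one [HasDistribNeg M] {i : ℕ}
    (hnw : g ^ S = 1 ∨ ∃ j, g ^ (S * 2 ^ j) = -1)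
    (hmax : ∀ j, g ^ (S * 2 ^ j) = -1 → j ≤ i) :
    g ^ (S * 2 ^ (i + 1)) = 1 ∧ (g ^ (S * 2 ^ i) = 1 ∨ g ^ (S * 2 ^ i) = -1) := by
  rcases hnw with h1 | ⟨j, hj⟩
  · have h0 : g ^ (S * 2 ^ 0) = 1 := by simpa using h1
    exact ⟨pow_mul_two_pow_eq_one_of_le h0 (Nat.zero_le _),
      Or.inl (pow_mul_two_pow_eq_one_of_le h0 (Nat.zero_le _))⟩
  · have hj1 := pow_mul_two_pow_succ_eq_one hj
    rcases (hmax j hj).eq_or_lt with rfl | hji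
    · exact ⟨hj1, Or.inr hj⟩
    · exact ⟨pow_mul_two_pow_eq_one_of_le hj1 (by omega),
        Or.inl (pow_mul_two_pow_eq_one_of_le hj1 hji)⟩

end TwoPowerLadder

theorem ZMod.natCast_eq_neg_one_iff {P : ℕ} (hP : 0 < P) (a : ℕ) :
    (a : ZMod P) = -1 ↔ a ≡ P - 1 [MOD P] := by
  rw [← ZMod.natCast_eq_natCast_iff, Nat.cast_sub hP, ZMod.natCast_self, Nat.cast_one, zero_sub]

theorem ZMod.natCast_eq_one_iff (P a : ℕ) : (a : ZMod P) = 1 ↔ a ≡ 1 [MOD P] := by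
  rw [← ZMod.natCast_eq_natCast_iff, Nat.cast_one]

theorem stmt_8_general (P S h i : ℕ) (hP : 1 < P)
    (hfact : P - 1 = S * 2 ^ h) (hi : i < h)
    (hnex : ¬ ∃ X : ℕ, X ^ (S * 2 ^ (i + 1)) ≡ P - 1 [MOD P]) :
    ∀ A : ℕ, 1 ≤ A → A < P → RMNonWitness P S h A →
      A ^ (S * 2 ^ (i + 1)) ≡ 1 [MOD P] ∧
      (A ^ (S * 2 ^ i) ≡ 1 [MOD P] ∨ A ^ (S * 2 ^ i) ≡ P - 1 [MOD P]) ∧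
      A ^ (P - 1) ≡ 1 [MOD P] := by
  intro A _ _ hnw
  have hP0 : 0 < P := by omega
  simp only [RMNonWitness, ← ZMod.natCast_eq_one_iff, ← ZMod.natCast_eq_neg_one_iff hP0,
    Nat.cast_pow] at hnw hnex ⊢
  have hmax : ∀ j, (A : ZMod P) ^ (S * 2 ^ j) = -1 → j ≤ i := by
    intro j hj
    by_contra! hij
    exact hnex ⟨A ^ 2 ^ (j - (i + 1)), by
      rw [Nat.cast_pow, ← pow_mul_two_pow_eq_pow_pow hij, hj]⟩
  obtain ⟨hsucc, hpm⟩ := pow_mul_two_pow_eq_one_and_eq_one_or_neg_one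
    (hnw.imp_right fun ⟨j, _, hj⟩ => ⟨j, hj⟩) hmax
  exact ⟨hsucc, hpm, hfact ▸ pow_mul_two_pow_eq_one_of_le hsucc hi⟩

/-- If `i < h` is such that `-1` is a power-residue at level `i` but not at
level `i+1`, then every Rabin–Miller non-witness `A` satisfies
`A^(S·2^(i+1)) ≡ 1 (mod P)` and `A^(S·2^i) ≡ ±1 (mod P)`; in particular
`A^(P-1) ≡ 1 (mod P)`. -/
theorem stmt_8 (P S h i : ℕ) (hodd : Odd P) (hP : 1 < P)
    (hfact : P - 1 = S * 2 ^ h) (hS : Odd S) (hi : i < h)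
    (hex : ∃ Z : ℕ, Z ^ (S * 2 ^ i) ≡ P - 1 [MOD P])
    (hnex : ¬ ∃ X : ℕ, X ^ (S * 2 ^ (i + 1)) ≡ P - 1 [MOD P]) :
    ∀ A : ℕ, 1 ≤ A → A < P → RMNonWitness P S h A →
      A ^ (S * 2 ^ (i + 1)) ≡ 1 [MOD P] ∧
      (A ^ (S * 2 ^ i) ≡ 1 [MOD P] ∨ A ^ (S * 2 ^ i) ≡ P - 1 [MOD P]) ∧
      A ^ (P - 1) ≡ 1 [MOD P] :=
  stmt_8_general P S h i hP hfact hi hnex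
end

section
/- Let P be an odd composite number and write P - 1 = S·2^h with S odd. Then there exist T and T' with T·T' ≡ 1 (mod P) such that for every A with 1 ≤ A < P, if A is a Rabin–Miller non-witness for P, then A·T mod P is a Rabin–Miller witness for P. In particular, multiplication by T modulo P is an injective map from non-witnesses into witnesses. -/
open Set

theorem one_add_pow_of_mul_self_eq_zero {R : Type*} [CommRing R] {c : R} (hc : c * c = 0)
    (n : ℕ) : (1 + c) ^ n = 1 + n * c := by
  induction n with
  | zero => simp
  | succ n ih =>
    rw [pow_succ, ih]
    push_cast
    linear_combination (n : R) * hc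

section CommMonoid

variable {M : Type*} [CommMonoid M] [HasDistribNeg M]

def IsRMNonWitness (S h : ℕ) (x : M) : Prop :=
  x ^ S = 1 ∨ ∃ i < h, x ^ (S * 2 ^ i) = -1

theorem pow_mul_two_pow_eq_one_of_eq_neg_one {x : M} {n i k : ℕ} (hx : x ^ (n * 2 ^ i) = -1)
    (hik : i < k) : x ^ (n * 2 ^ k) = 1 := by
  rw [show n * 2 ^ k = n * 2 ^ i * 2 ^ (k - i) by rw [mul_assoc, ← pow_add]; congr 2; omega,
    pow_mul, hx, (Nat.even_pow.mpr ⟨even_two, by omega⟩).neg_one_pow]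

namespace IsRMNonWitness

variable {S h : ℕ} {x t : M}

theorem pow_eq_one (hx : IsRMNonWitness S h x) : x ^ (S * 2 ^ h) = 1 := by
  rcases hx with hx | ⟨i, hi, hx⟩
  · rw [pow_mul, hx, one_pow]
  · exact pow_mul_two_pow_eq_one_of_eq_neg_one hx hi

theorem pow_eq_one_or_neg_one {j : ℕ}
    (hj : ∀ i, j < i → i < h → ∀ y : M, y ^ (S * 2 ^ i) ≠ -1)
    (hx : IsRMNonWitness S h x) : x ^ (S * 2 ^ j) = 1 ∨ x ^ (S * 2 ^ j) = -1 := by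
  rcases hx with hx | ⟨i, hi, hx⟩
  · rw [pow_mul, hx, one_pow]; exact .inl rfl
  rcases lt_trichotomy i j with hij | rfl | hij
  · exact .inl (pow_mul_two_pow_eq_one_of_eq_neg_one hx hij)
  · exact .inr hx
  · exact absurd hx (hj i hij hi x)

theorem not_mul_of_pow_ne_one (hx : IsRMNonWitness S h x) (ht : t ^ (S * 2 ^ h) ≠ 1) :
    ¬ IsRMNonWitness S h (x * t) := fun hxt =>
  ht (by simpa [mul_pow, hx.pow_eq_one] using hxt.pow_eq_one)

theorem not_mul_of_pow_ne_one_of_pow_ne_neg_one {j : ℕ}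
    (hj : ∀ i, j < i → i < h → ∀ y : M, y ^ (S * 2 ^ i) ≠ -1) (hx : IsRMNonWitness S h x)
    (ht₁ : t ^ (S * 2 ^ j) ≠ 1) (ht₂ : t ^ (S * 2 ^ j) ≠ -1) :
    ¬ IsRMNonWitness S h (x * t) := fun hxt => by
  have hxt := hxt.pow_eq_one_or_neg_one hj
  rw [mul_pow] at hxt
  rcases hx.pow_eq_one_or_neg_one hj with hx | hx <;>
    simp only [hx, one_mul, neg_one_mul, neg_eq_iff_eq_neg, neg_neg] at hxt <;> tauto

end IsRMNonWitness

end CommMonoid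

theorem rmNonWitness_iff_isRMNonWitness {P S h A : ℕ} [NeZero P] :
    RMNonWitness P S h A ↔ IsRMNonWitness S h (A : ZMod P) := by
  simp only [RMNonWitness, IsRMNonWitness, ← ZMod.natCast_eq_natCast_iff, Nat.cast_pow,
    Nat.cast_one, Nat.cast_sub NeZero.one_le, ZMod.natCast_self, zero_sub]

theorem Nat.exists_coprime_mul_eq_of_squarefree {n : ℕ} (hsf : Squarefree n) (hn : 1 < n)
    (hnp : ¬ n.Prime) : ∃ p q, 1 < p ∧ 1 < q ∧ p.Coprime q ∧ p * q = n := by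
  have hp := Nat.minFac_prime hn.ne'
  have hpq : n.minFac * (n / n.minFac) = n := Nat.mul_div_cancel' n.minFac_dvd
  refine ⟨n.minFac, n / n.minFac, hp.one_lt, ?_,
    Nat.coprime_of_squarefree_mul (hpq.symm ▸ hsf), hpq⟩
  refine lt_of_le_of_ne (Nat.div_pos (Nat.minFac_le (by omega)) hp.pos) fun hq => hnp ?_
  rwa [← hpq, ← hq, mul_one]

theorem Nat.two_lt_of_odd {n : ℕ} (hodd : Odd n) (hn : 1 < n) : 2 < n := by
  obtain ⟨k, rfl⟩ := hodd
  omega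

namespace ZMod

theorem orderOf_one_add_natCast_div {P p : ℕ} [NeZero P] (hp : p.Prime) (hpP : p * p ∣ P) :
    orderOf (1 + ((P / p : ℕ) : ZMod P)) = p := by
  have := Fact.mk hp
  obtain ⟨m, hm⟩ := hpP
  have hm0 : 0 < m := Nat.pos_of_ne_zero (by rintro rfl; exact NeZero.ne P (by simpa using hm))
  rw [show P / p = p * m by rw [hm, mul_assoc, Nat.mul_div_cancel_left _ hp.pos]]
  apply orderOf_eq_prime
  · have hsq : ((p * m : ℕ) : ZMod P) * (p * m : ℕ) = 0 := by
      rw [← Nat.cast_mul, natCast_eq_zero_iff]; exact ⟨m, by rw [hm]; ring⟩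
    rw [one_add_pow_of_mul_self_eq_zero hsq, ← Nat.cast_mul,
      (natCast_eq_zero_iff _ _).mpr ⟨1, by rw [hm]; ring⟩, add_zero]
  · rw [ne_eq, add_eq_left, natCast_eq_zero_iff]
    refine fun hdvd => (Nat.le_of_dvd (Nat.mul_pos hp.pos hm0) hdvd).not_gt ?_
    rw [hm]; nlinarith [hp.two_le]

theorem exists_unit_mapsTo_of_mul_self_dvd {P p S h : ℕ} [NeZero P] (hp : p.Prime)
    (hpP : p * p ∣ P) (hfact : P - 1 = S * 2 ^ h) :
    ∃ t : (ZMod P)ˣ,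
      MapsTo (· * (t : ZMod P)) {x | IsRMNonWitness S h x} {x | IsRMNonWitness S h x}ᶜ := by
  have hord := orderOf_one_add_natCast_div hp hpP
  refine ⟨Units.ofPowEqOne _ p (hord ▸ pow_orderOf_eq_one _) hp.ne_zero,
    fun x hx => hx.not_mul_of_pow_ne_one ?_⟩
  rw [Units.val_ofPowEqOne, ← hfact, ne_eq, ← orderOf_dvd_iff_pow_eq_one, hord]
  intro hp1
  have := Nat.dvd_sub (dvd_trans (dvd_mul_right p p) hpP) hp1
  rw [Nat.sub_sub_self NeZero.one_le, Nat.dvd_one] at this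
  exact hp.ne_one this

theorem exists_unit_mapsTo_of_coprime {p q S h : ℕ} (hp : 2 < p) (hq : 2 < q)
    (hpq : p.Coprime q) (hS : Odd S) (hh : 0 < h) :
    ∃ t : (ZMod (p * q))ˣ, MapsTo (· * (t : ZMod (p * q))) {x | IsRMNonWitness S h x}
      {x | IsRMNonWitness S h x}ᶜ := by
  classical
  have := Fact.mk hp
  have := Fact.mk hq
  set j := Nat.findGreatest (fun i => ∃ a : ZMod (p * q), a ^ (S * 2 ^ i) = -1) (h - 1)
  obtain ⟨a, ha⟩ : ∃ a : ZMod (p * q), a ^ (S * 2 ^ j) = -1 :=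
    Nat.findGreatest_spec (P := fun i => ∃ a : ZMod (p * q), a ^ (S * 2 ^ i) = -1)
      (Nat.zero_le _) ⟨-1, by simpa using hS.neg_one_pow⟩
  have hj : ∀ i, j < i → i < h → ∀ y : ZMod (p * q), y ^ (S * 2 ^ i) ≠ -1 :=
    fun i hji hih y hy => Nat.findGreatest_is_greatest hji (by omega) ⟨y, hy⟩
  let e := chineseRemainder hpq
  set t := e.symm ((e a).1, 1)
  have hte : e (t ^ (S * 2 ^ j)) = (-1, 1) := by
    rw [map_pow, RingEquiv.apply_symm_apply, Prod.pow_mk, one_pow, ← Prod.pow_fst, ← map_pow,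
      ha, map_neg, map_one, Prod.fst_neg, Prod.fst_one]
  have ht₁ : t ^ (S * 2 ^ j) ≠ 1 := fun h1 => by
    simp [h1, Prod.ext_iff, neg_one_ne_one.symm] at hte
  have ht₂ : t ^ (S * 2 ^ j) ≠ -1 := fun h1 => by
    simp [h1, Prod.ext_iff, neg_one_ne_one] at hte
  have ht : t ^ (S * 2 ^ j * 2) = 1 := e.injective (by
    rw [pow_mul, map_pow, hte, map_one, Prod.pow_mk, neg_one_sq, one_pow]; rfl)
  exact ⟨Units.ofPowEqOne t _ ht (by have := hS.pos; positivity),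
    fun x hx => hx.not_mul_of_pow_ne_one_of_pow_ne_neg_one hj ht₁ ht₂⟩

theorem exists_unit_mapsTo_of_not_prime {P S h : ℕ} (hodd : Odd P) (hP : 1 < P)
    (hnp : ¬ P.Prime) (hfact : P - 1 = S * 2 ^ h) (hS : Odd S) :
    ∃ t : (ZMod P)ˣ,
      MapsTo (· * (t : ZMod P)) {x | IsRMNonWitness S h x} {x | IsRMNonWitness S h x}ᶜ := by
  by_cases hsf : Squarefree P
  · have hh : 0 < h := by
      obtain ⟨k, rfl⟩ := hodd
      obtain ⟨m, rfl⟩ := hS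
      refine Nat.pos_of_ne_zero fun h0 => ?_
      rw [h0, pow_zero, mul_one] at hfact
      omega
    obtain ⟨p, q, hp, hq, hpq, rfl⟩ := Nat.exists_coprime_mul_eq_of_squarefree hsf hP hnp
    exact exists_unit_mapsTo_of_coprime (Nat.two_lt_of_odd (Nat.Odd.of_mul_left hodd) hp)
      (Nat.two_lt_of_odd (Nat.Odd.of_mul_right hodd) hq) hpq hS hh
  · have : NeZero P := ⟨by omega⟩
    obtain ⟨p, hp, hpP⟩ : ∃ p, p.Prime ∧ p * p ∣ P := by
      simpa [Nat.squarefree_iff_prime_squarefree] using hsf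
    exact exists_unit_mapsTo_of_mul_self_dvd hp hpP hfact

end ZMod

/-- For odd composite `P` with `P - 1 = S·2^h` (`S` odd) there exist `T, T'`
with `T·T' ≡ 1 (mod P)` mapping each non-witness `A` (via `A·T mod P`) to a witness;
this map is injective. -/
theorem stmt_9 (P S h : ℕ) (hodd : Odd P) (hP : 1 < P) (hnp : ¬ P.Prime)
    (hfact : P - 1 = S * 2 ^ h) (hS : Odd S) :
    ∃ T T' : ℕ, T * T' ≡ 1 [MOD P] ∧
      (∀ A : ℕ, 1 ≤ A → A < P → RMNonWitness P S h A →
        ¬ RMNonWitness P S h (A * T % P)) ∧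
      (∀ A B : ℕ, 1 ≤ A → A < P → 1 ≤ B → B < P →
        A * T % P = B * T % P → A = B) := by
  have : NeZero P := ⟨by omega⟩
  obtain ⟨t, ht⟩ := ZMod.exists_unit_mapsTo_of_not_prime hodd hP hnp hfact hS
  have hcast (A : ℕ) : ((A * (t : ZMod P).val % P : ℕ) : ZMod P) = A * t := by
    rw [ZMod.natCast_mod, Nat.cast_mul, ZMod.natCast_zmod_val]
  refine ⟨(t : ZMod P).val, (↑t⁻¹ : ZMod P).val, ?_, fun A _ _ hA => ?_,
    fun A B _ hA _ hB hAB => ?_⟩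
  · rw [← ZMod.natCast_eq_natCast_iff, Nat.cast_mul, ZMod.natCast_zmod_val,
      ZMod.natCast_zmod_val, Units.mul_inv, Nat.cast_one]
  · rw [rmNonWitness_iff_isRMNonWitness] at hA
    rw [rmNonWitness_iff_isRMNonWitness, hcast]
    exact ht hA
  · have := congrArg (Nat.cast : ℕ → ZMod P) hAB
    rw [hcast, hcast, Units.mul_left_inj] at this
    rw [← ZMod.val_natCast_of_lt hA, this, ZMod.val_natCast_of_lt hB]
end

section
/- Let P be an odd composite number and write P - 1 = S·2^h with S odd. Then the number of A with 1 ≤ A < P that are Rabin–Miller non-witnesses for P is at most (P-1)/2; equivalently, the Rabin–Miller test rejects a composite input P for at least half of the bases A in {1, …, P-1}. -/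
open ArithmeticFunction

section PmOneRoots

variable {G : Type*} [CommGroup G] [HasDistribNeg G]

variable (G) in
def pmOneRoots (n : ℕ) : Subgroup G where
  carrier := {g | g ^ n = 1 ∨ g ^ n = -1}
  mul_mem' := by rintro a b (ha | ha) (hb | hb) <;> simp [mul_pow, ha, hb]
  one_mem' := Or.inl (one_pow n)
  inv_mem' := by rintro a (ha | ha) <;> simp [inv_pow, ha]

theorem mem_pmOneRoots {n : ℕ} {g : G} : g ∈ pmOneRoots G n ↔ g ^ n = 1 ∨ g ^ n = -1 :=
  Iff.rfl

theorem pmOneRoots_mono {m n : ℕ} (h : m ∣ n) : pmOneRoots G m ≤ pmOneRoots G n := by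
  obtain ⟨k, rfl⟩ := h
  rintro g (hg | hg)
  · exact Or.inl (by rw [pow_mul, hg, one_pow])
  · rw [mem_pmOneRoots, pow_mul, hg]
    exact neg_one_pow_eq_or G k

end PmOneRoots

theorem exists_unit_mem_pmOneRoots {M : Type*} [CommMonoid M] [HasDistribNeg M] {x : M} {n : ℕ}
    (hn : n ≠ 0) (hx : x ^ n = 1 ∨ x ^ n = -1) : ∃ u ∈ pmOneRoots Mˣ n, (u : M) = x := by
  have hsq : x ^ (n * 2) = 1 := by rcases hx with hx | hx <;> simp [pow_mul, hx]
  obtain ⟨u, rfl⟩ := IsUnit.of_pow_eq_one hsq (by positivity)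
  refine ⟨u, ?_, rfl⟩
  rcases hx with hx | hx
  · exact Or.inl (Units.ext (by simpa using hx))
  · exact Or.inr (Units.ext (by simpa using hx))

theorem Subgroup.two_mul_card_le_of_ne_top {G : Type*} [Group G] [Finite G] {H : Subgroup G}
    (hH : H ≠ ⊤) : 2 * Nat.card H ≤ Nat.card G := by
  rw [← H.card_mul_index, mul_comm]
  exact Nat.mul_le_mul_left _ (H.one_lt_index_of_ne_top hH)

theorem Nat.exists_sq_dvd_or_eq_coprime_mul {n : ℕ} (hn : 1 < n) (hnp : ¬n.Prime) :
    (∃ q, q.Prime ∧ q ^ 2 ∣ n) ∨ ∃ m k, m.Coprime k ∧ 1 < m ∧ 1 < k ∧ n = m * k := by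
  set q := n.minFac
  have hq : q.Prime := Nat.minFac_prime (by omega)
  by_cases hsq : q ^ 2 ∣ n
  · exact Or.inl ⟨q, hq, hsq⟩
  obtain ⟨c, hc⟩ : q ∣ n := n.minFac_dvd
  refine Or.inr ⟨q, c, ?_, hq.one_lt, ?_, hc⟩
  · refine hq.coprime_iff_not_dvd.mpr fun h ↦ hsq ?_
    rw [hc, sq]
    exact mul_dvd_mul_left q h
  · rcases c with _ | _ | c
    · omega
    · exact absurd (by simpa [hc] using hq) hnp
    · omega

theorem Nat.Prime.dvd_carmichael_sq {q : ℕ} (hq : q.Prime) : q ∣ carmichael (q ^ 2) := by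
  rcases eq_or_ne q 2 with rfl | hq2
  · rw [carmichael_two_pow_of_le_two le_rfl]
    norm_num
  · rw [carmichael_pow_of_prime_ne_two 2 hq hq2, Nat.totient_prime_pow hq two_pos]
    exact (dvd_pow_self q one_ne_zero).mul_right _

theorem pmOneRoots_ne_top_of_sq_dvd {P q n : ℕ} (hP : P ≠ 0) (hq : q.Prime) (hqP : q ^ 2 ∣ P)
    (hn : 2 * n ∣ P - 1) : pmOneRoots (ZMod P)ˣ n ≠ ⊤ := by
  intro htop
  have hexp : carmichael P ∣ 2 * n := by
    rw [carmichael_eq_exponent hP]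
    refine Monoid.exponent_dvd_of_forall_pow_eq_one fun u ↦ ?_
    rcases mem_pmOneRoots.mp (htop ▸ Subgroup.mem_top u) with hu | hu <;>
      simp [mul_comm 2 n, pow_mul, hu]
  have hqP1 : q ∣ P - 1 :=
    (hq.dvd_carmichael_sq.trans (carmichael_dvd hqP)).trans (hexp.trans hn)
  have hqP : q ∣ P := (dvd_pow_self q two_ne_zero).trans hqP
  have h1 : P - (P - 1) = 1 := by omega
  exact hq.not_dvd_one (h1 ▸ Nat.dvd_sub hqP hqP1)

theorem pmOneRoots_ne_top_of_coprime {m k n : ℕ} (hmk : m.Coprime k) (hm : (-1 : ZMod m) ≠ 1)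
    (hk : (-1 : ZMod k) ≠ 1) (a : (ZMod (m * k))ˣ) (ha : a ^ n = -1) :
    pmOneRoots (ZMod (m * k))ˣ n ≠ ⊤ := by
  intro htop
  let e := ZMod.chineseRemainder hmk
  let y := ZMod.castHom (dvd_mul_right m k) (ZMod m) a
  have hy : y ^ n = -1 := by
    simp only [y, ← map_pow, ← Units.val_pow_eq_pow_val, ha, Units.val_neg, Units.val_one, map_neg,
      map_one]
  have hunit : IsUnit (e.symm (y, 1)) :=
    (Prod.isUnit_iff.mpr ⟨a.isUnit.map _, isUnit_one⟩).map e.symm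
  have hpow : e (hunit.unit ^ n : (ZMod (m * k))ˣ) = (-1, 1) := by
    simp [hy]
  rcases mem_pmOneRoots.mp (htop ▸ Subgroup.mem_top hunit.unit) with hu | hu
  · exact hm (by simpa [hu, Prod.ext_iff] using hpow.symm)
  · exact hk (by simpa [hu, Prod.ext_iff] using hpow)

theorem ZMod.neg_one_ne_one_of_odd {n : ℕ} (hodd : Odd n) (hn : 1 < n) : (-1 : ZMod n) ≠ 1 :=
  have : Fact (2 < n) := ⟨by obtain ⟨k, rfl⟩ := hodd; omega⟩
  ZMod.neg_one_ne_one

theorem pmOneRoots_ne_top {P n : ℕ} (hodd : Odd P) (hP : 1 < P) (hnp : ¬P.Prime)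
    (hn : 2 * n ∣ P - 1) (a : (ZMod P)ˣ) (ha : a ^ n = -1) : pmOneRoots (ZMod P)ˣ n ≠ ⊤ := by
  rcases Nat.exists_sq_dvd_or_eq_coprime_mul hP hnp with ⟨q, hq, hqP⟩ | ⟨m, k, hmk, hm, hk, rfl⟩
  · exact pmOneRoots_ne_top_of_sq_dvd (by omega) hq hqP hn
  · exact pmOneRoots_ne_top_of_coprime hmk
      (ZMod.neg_one_ne_one_of_odd (Nat.Odd.of_mul_left hodd) hm)
      (ZMod.neg_one_ne_one_of_odd (Nat.Odd.of_mul_right hodd) hk) a ha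

theorem rmNonWitness_iff {P S h A : ℕ} (hP : 0 < P) :
    RMNonWitness P S h A ↔ (A : ZMod P) ^ S = 1 ∨ ∃ i < h, (A : ZMod P) ^ (S * 2 ^ i) = -1 := by
  have hneg : ((P - 1 : ℕ) : ZMod P) = -1 := by simp [Nat.cast_sub hP]
  simp only [RMNonWitness, ← ZMod.natCast_eq_natCast_iff, Nat.cast_pow, hneg, Nat.cast_one]

theorem ncard_le_card_of_forall_exists_unit {P : ℕ} [NeZero P] (B : Subgroup (ZMod P)ˣ)
    {s : Set ℕ} (hs : ∀ A ∈ s, A < P ∧ ∃ u ∈ B, (u : ZMod P) = A) : s.ncard ≤ Nat.card B := by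
  have hinj : Set.InjOn (fun A : ℕ ↦ (A : ZMod P)) s := fun A hA A' hA' hAA' ↦ by
    simpa [ZMod.val_cast_of_lt (hs A hA).1, ZMod.val_cast_of_lt (hs A' hA').1] using
      congrArg ZMod.val hAA'
  calc s.ncard ≤ (Units.val '' (B : Set (ZMod P)ˣ)).ncard :=
        Set.ncard_le_ncard_of_injOn _ (fun A hA ↦ (hs A hA).2) hinj (Set.toFinite _)
    _ = Nat.card B := by
        rw [Set.ncard_image_of_injective _ Units.val_injective, ← Nat.card_coe_set_eq]
        rfl

theorem Nat.exists_greatest_lt {p : ℕ → Prop} {n : ℕ} (hn : 0 < n) (h0 : p 0) :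
    ∃ j < n, p j ∧ ∀ i < n, p i → i ≤ j := by
  classical
  refine ⟨Nat.findGreatest p (n - 1), ?_, Nat.findGreatest_spec (Nat.zero_le _) h0,
    fun i hi hpi ↦ Nat.le_findGreatest (by omega) hpi⟩
  have := Nat.findGreatest_le (P := p) (n - 1)
  omega

theorem exists_mem_pmOneRoots_of_rmNonWitness {P S h j A : ℕ} (hP : 0 < P) (hS : S ≠ 0)
    (hj : ∀ i < h, (∃ u : (ZMod P)ˣ, u ^ (S * 2 ^ i) = -1) → i ≤ j) (hA : RMNonWitness P S h A) :
    ∃ u ∈ pmOneRoots (ZMod P)ˣ (S * 2 ^ j), (u : ZMod P) = A := by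
  rcases (rmNonWitness_iff hP).1 hA with hA | ⟨i, hih, hA⟩
  · obtain ⟨u, hu, huA⟩ := exists_unit_mem_pmOneRoots hS (Or.inl hA)
    exact ⟨u, pmOneRoots_mono (dvd_mul_right S _) hu, huA⟩
  · obtain ⟨u, hu, huA⟩ := exists_unit_mem_pmOneRoots (by simp [hS]) (Or.inr hA)
    have hij : i ≤ j := hj i hih ⟨u, Units.ext (by simpa [huA] using hA)⟩
    exact ⟨u, pmOneRoots_mono (mul_dvd_mul_left S (pow_dvd_pow 2 hij)) hu, huA⟩

/-- For odd composite `P` with `P - 1 = S·2^h` (`S` odd), the number of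
Rabin–Miller non-witnesses `A` with `1 ≤ A < P` is at most `(P-1)/2`. -/
theorem stmt_10 (P S h : ℕ) (hodd : Odd P) (hP : 1 < P) (hnp : ¬ P.Prime)
    (hfact : P - 1 = S * 2 ^ h) (hS : Odd S) :
    {A : ℕ | 1 ≤ A ∧ A < P ∧ RMNonWitness P S h A}.ncard ≤ (P - 1) / 2 := by
  have : NeZero P := ⟨by omega⟩
  have hh : 0 < h := by
    refine Nat.pos_of_ne_zero fun h0 ↦ Nat.not_even_iff_odd.mpr hS ?_
    simpa [hfact, h0] using Nat.Odd.sub_odd hodd odd_one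
  obtain ⟨j, hjh, ⟨a, ha⟩, hjmax⟩ := Nat.exists_greatest_lt
    (p := fun i ↦ ∃ u : (ZMod P)ˣ, u ^ (S * 2 ^ i) = -1) hh ⟨-1, by simpa using hS.neg_one_pow⟩
  set B := pmOneRoots (ZMod P)ˣ (S * 2 ^ j)
  have hdvd : 2 * (S * 2 ^ j) ∣ P - 1 := by
    obtain ⟨d, rfl⟩ := Nat.exists_eq_add_of_lt hjh
    exact ⟨2 ^ d, by rw [hfact]; ring⟩
  have hcard : 2 * Nat.card B ≤ P - 1 := calc
    2 * Nat.card B ≤ Nat.card (ZMod P)ˣ :=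
      Subgroup.two_mul_card_le_of_ne_top (pmOneRoots_ne_top hodd hP hnp hdvd a ha)
    _ = P.totient := Nat.card_eq_fintype_card.trans (ZMod.card_units_eq_totient P)
    _ ≤ P - 1 := Nat.le_sub_one_of_lt (Nat.totient_lt P hP)
  calc _ ≤ Nat.card B := ncard_le_card_of_forall_exists_unit B fun A hA ↦
        ⟨hA.2.1, exists_mem_pmOneRoots_of_rmNonWitness (by omega) hS.pos.ne' hjmax hA.2.2⟩
    _ ≤ (P - 1) / 2 := by omega
end
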